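/- Let B be a d-dimensional hypercuboid with side lengths b_1,…,b_d > 0 and let B' be obtained by decreasing each side length by at most s ≥ 0 (with each resulting length still nonnegative). Define vol(C) as the product of the side lengths of C and surf(C) = 2·∑_{i=1}^d vol(C)/c_i where c_i are the side lengths of C. Then vol(B') − s·surf(B')/2 ≥ vol(B) − s·surf(B). -/
import Mathlib


/-- `vol` of a hypercuboid: product of its side lengths. -/
noncomputable def vol {d : ℕ} (c : Fin d → ℝ) : ℝ := ∏ i, c i

/-- `surf` of a hypercuboid: `2 ∑ i vol / c i`. -/
noncomputable def surf {d : ℕ} (c : Fin d → ℝ) : ℝ := 2 * ∑ i, vol c / c i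

/-- Telescoping bound: difference of products is at most sum of differences
times products of the larger sides. -/
lemma prod_sub_prod_le_aux {d : ℕ} (b b' : Fin d → ℝ)
    (hb'0 : ∀ i, 0 ≤ b' i) (hup : ∀ i, b' i ≤ b i) (t : Finset (Fin d)) :
    ∏ i ∈ t, b i - ∏ i ∈ t, b' i ≤
      ∑ i ∈ t, (b i - b' i) * ∏ j ∈ t.erase i, b j := by
  classical
  induction t using Finset.induction with
  | empty => simp
  | @insert a t ha ih =>
    rw [Finset.prod_insert ha, Finset.prod_insert ha, Finset.sum_insert ha]
    have hb0 : ∀ i, 0 ≤ b i := fun i => le_trans (hb'0 i) (hup i)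
    have hP'P : ∏ i ∈ t, b' i ≤ ∏ i ∈ t, b i :=
      Finset.prod_le_prod (fun i _ => hb'0 i) (fun i _ => hup i)
    have key : b a * ∏ i ∈ t, b i - b' a * ∏ i ∈ t, b' i
        = b a * (∏ i ∈ t, b i - ∏ i ∈ t, b' i) + (b a - b' a) * ∏ i ∈ t, b' i := by
      ring
    rw [key]
    have h1 : b a * (∏ i ∈ t, b i - ∏ i ∈ t, b' i)
        ≤ b a * ∑ i ∈ t, (b i - b' i) * ∏ j ∈ t.erase i, b j :=
      mul_le_mul_of_nonneg_left ih (hb0 a)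
    have h2 : (b a - b' a) * ∏ i ∈ t, b' i ≤ (b a - b' a) * ∏ i ∈ t, b i :=
      mul_le_mul_of_nonneg_left hP'P (by linarith [hup a])
    have herase : ∀ i ∈ t, (insert a t).erase i = insert a (t.erase i) := by
      intro i hi
      rw [Finset.erase_insert_of_ne]
      rintro rfl; exact ha hi
    have hsum : ∑ i ∈ t, (b i - b' i) * ∏ j ∈ (insert a t).erase i, b j
        = b a * ∑ i ∈ t, (b i - b' i) * ∏ j ∈ t.erase i, b j := by
      rw [Finset.mul_sum]
      refine Finset.sum_congr rfl fun i hi => ?_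
      rw [herase i hi, Finset.prod_insert (fun h => ha (Finset.mem_of_mem_erase h))]
      ring
    rw [Finset.erase_insert ha, hsum]
    linarith

lemma vol_div_le {d : ℕ} (c : Fin d → ℝ) (hc : ∀ i, 0 ≤ c i) (i : Fin d) :
    vol c / c i ≤ ∏ j ∈ Finset.univ.erase i, c j := by
  classical
  rcases eq_or_lt_of_le (hc i) with h | h
  · rw [vol, ← h, div_zero]
    exact Finset.prod_nonneg fun j _ => hc j
  · rw [vol, ← Finset.prod_erase_mul _ _ (Finset.mem_univ i),
      mul_div_assoc, div_self (ne_of_gt h), mul_one]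

lemma vol_div_eq {d : ℕ} (c : Fin d → ℝ) (hc : ∀ i, 0 < c i) (i : Fin d) :
    vol c / c i = ∏ j ∈ Finset.univ.erase i, c j := by
  rw [vol, ← Finset.prod_erase_mul _ _ (Finset.mem_univ i),
    mul_div_assoc, div_self (ne_of_gt (hc i)), mul_one]

/-- Shrinking each side of a hypercuboid `b` by at most `s` (keeping lengths
nonnegative) yields `b'` with `vol b' − s·surf b'/2 ≥ vol b − s·surf b`. -/
theorem stmt_1 (d : ℕ) (b b' : Fin d → ℝ) (hb : ∀ i, 0 < b i)
    (s : ℝ) (hs : 0 ≤ s)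
    (hb'0 : ∀ i, 0 ≤ b' i) (hlow : ∀ i, b i - s ≤ b' i) (hup : ∀ i, b' i ≤ b i) :
    vol b' - s * surf b' / 2 ≥ vol b - s * surf b := by
  classical
  have hsurf : surf b' ≤ surf b := by
    unfold surf
    have : ∀ i ∈ Finset.univ, vol b' / b' i ≤ vol b / b i := by
      intro i _
      rw [vol_div_eq b hb i]
      refine le_trans (vol_div_le b' hb'0 i) ?_
      exact Finset.prod_le_prod (fun j _ => hb'0 j) (fun j _ => hup j)
    linarith [Finset.sum_le_sum this]
  have hvol : vol b - vol b' ≤ s * surf b / 2 := by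
    have h1 : vol b - vol b' ≤
        ∑ i, (b i - b' i) * ∏ j ∈ Finset.univ.erase i, b j :=
      prod_sub_prod_le_aux b b' hb'0 hup Finset.univ
    have h2 : ∑ i, (b i - b' i) * ∏ j ∈ Finset.univ.erase i, b j
        ≤ ∑ i, s * (vol b / b i) := by
      refine Finset.sum_le_sum fun i _ => ?_
      rw [vol_div_eq b hb i]
      exact mul_le_mul_of_nonneg_right (by linarith [hlow i])
        (Finset.prod_nonneg fun j _ => le_of_lt (hb j))
    have : ∑ i, s * (vol b / b i) = s * surf b / 2 := by
      rw [surf, ← Finset.mul_sum]; ring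
    linarith
  nlinarith [hsurf, hvol]
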